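/- Let 𝒢 be a graph covering with minimal inverse limit system (V_𝒢, f). Then for every n ≥ 0 there exists m > n such that every circuit c of G_m satisfies V(φ_{m,n}(c)) = V(G_n). -/

import Mathlib

/-- The edge relation is surjective: every vertex has an incoming and outgoing edge. -/
def IsSurjRel {V : Type*} (E : Set (V × V)) : Prop :=
  ∀ v : V, (∃ u, (u, v) ∈ E) ∧ (∃ u, (v, u) ∈ E)

/-- A cover: a positively directional edge-surjective graph homomorphism. -/
def IsCover {V₁ V₂ : Type*} (E₁ : Set (V₁ × V₁)) (E₂ : Set (V₂ × V₂))
    (φ : V₁ → V₂) : Prop :=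
  (∀ u v : V₁, (u, v) ∈ E₁ → (φ u, φ v) ∈ E₂) ∧
  ((fun e : V₁ × V₁ => (φ e.1, φ e.2)) '' E₁ = E₂) ∧
  (∀ u v v' : V₁, (u, v) ∈ E₁ → (u, v') ∈ E₁ → φ v = φ v')

/-- A graph covering: a sequence of covers `φ i : G (i+1) → G i` between finite
directed surjective graphs, with `G 0` a singleton graph. -/
structure GraphCovering (V : ℕ → Type*) where
  E : ∀ i, Set (V i × V i)
  φ : ∀ i, V (i + 1) → V i
  surj : ∀ i, IsSurjRel (E i)
  cover : ∀ i, IsCover (E (i + 1)) (E i) (φ i)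
  single : Subsingleton (V 0)
  nonempty₀ : Nonempty (V 0)

/-- The inverse limit vertex set of a graph covering. -/
def GraphCovering.limitSet {V : ℕ → Type*} (G : GraphCovering V) :
    Set (∀ i, V i) :=
  { x | ∀ i, x i = G.φ i (x (i + 1)) }

/-- The composed covering map `φ_{m,n} : V m → V n` for `n ≤ m`. -/
def compMap {V : ℕ → Type*} (φ : ∀ i, V (i + 1) → V i) :
    ∀ {n m : ℕ}, n ≤ m → V m → V n :=
  fun {n} {m} h =>
    Nat.leRecOn (C := fun k => V k → V n) h
      (fun {k} ih x => ih (φ k x)) id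

/-- A circuit of period `l` in the graph with edge set `E`. -/
def IsCircuit {V : Type*} (E : Set (V × V)) (l : ℕ) (c : ℕ → V) : Prop :=
  1 ≤ l ∧ c l = c 0 ∧ (∀ i < l, (c i, c (i + 1)) ∈ E) ∧
    ∀ i < l, ∀ j < l, c i = c j → i = j


/-!
The `n`-th coordinate of `f x` depends only on the `(n+1)`-st coordinate of `x`, so `f` is a
continuous self-map of the compact inverse limit. By minimality every orbit enters each cylinder
`{x | x n = v}`, and compactness bounds the entrance time by some `N`, uniformly in the starting
point and in `v`. Put `m = n + N + 1` and start at a point whose `m`-th coordinate lies on a circuit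
of `G m`: for `k ≤ N` the `n`-th coordinate of `f^[k] x` is the `φ_{m,n}`-image of the `k`-th
vertex along the circuit, so the projected circuit meets every vertex of `G n`.
-/

open Filter

section CompMap

variable {V : ℕ → Type*} (φ : ∀ i, V (i + 1) → V i)

theorem compMap_refl {n : ℕ} (h : n ≤ n) (x : V n) : compMap φ h x = x :=
  congrFun (Nat.leRecOn_self (C := fun k => V k → V n) (next := fun {k} ih x => ih (φ k x)) id) x

theorem compMap_succ {n m : ℕ} (h : n ≤ m) (h' : n ≤ m + 1) (x : V (m + 1)) :
    compMap φ h' x = compMap φ h (φ m x) :=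
  congrFun
    (Nat.leRecOn_succ (C := fun k => V k → V n) (next := fun {k} ih x => ih (φ k x)) h id) x

theorem φ_compMap {n m : ℕ} (h : n + 1 ≤ m) (h' : n ≤ m) (x : V m) :
    φ n (compMap φ h x) = compMap φ h' x := by
  induction m, h using Nat.le_induction with
  | base => rw [compMap_refl, compMap_succ φ le_rfl, compMap_refl]
  | succ m hm ih => rw [compMap_succ φ hm, compMap_succ φ (by omega), ih]

end CompMap

theorem IsCircuit.mem_mod {W : Type*} {E : Set (W × W)} {l : ℕ} {c : ℕ → W}
    (hc : IsCircuit E l c) (k : ℕ) : (c (k % l), c ((k + 1) % l)) ∈ E := by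
  obtain ⟨hl, hcl, hedge, -⟩ := hc
  have hk : k % l < l := Nat.mod_lt k hl
  have hsucc : (k + 1) % l = (k % l + 1) % l := (Nat.mod_add_mod k l 1).symm
  rcases (Nat.succ_le_of_lt hk).eq_or_lt with hlast | hlt
  · have hlast : k % l + 1 = l := hlast
    have h := hedge _ hk
    rw [hlast, hcl] at h
    rwa [hsucc, hlast, Nat.mod_self]
  · rw [hsucc, Nat.mod_eq_of_lt hlt]
    exact hedge _ hk

theorem eventually_forall_exists_iterate_mem {X : Type*} [TopologicalSpace X] [CompactSpace X]
    {f : X → X} (hf : Continuous f) {U : Set X} (hU : IsOpen U)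
    (hvisit : ∀ x, ∃ k, f^[k] x ∈ U) :
    ∀ᶠ N in atTop, ∀ x, ∃ k ≤ N, f^[k] x ∈ U := by
  obtain ⟨t, ht⟩ := isCompact_univ.elim_finite_subcover (fun k => f^[k] ⁻¹' U)
    (fun k => hU.preimage (hf.iterate k)) fun x _ => Set.mem_iUnion.mpr (hvisit x)
  filter_upwards [eventually_ge_atTop (t.sup id)] with N hN x
  obtain ⟨k, hkt, hk⟩ := Set.mem_iUnion₂.mp (ht (Set.mem_univ x))
  exact ⟨k, (Finset.le_sup (f := id) hkt).trans hN, hk⟩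

namespace GraphCovering

variable {V : ℕ → Type*} (G : GraphCovering V)

theorem φ_surjective (i : ℕ) : Function.Surjective (G.φ i) := by
  intro w
  obtain ⟨u, hu⟩ := (G.surj i w).1
  rw [← (G.cover i).2.1] at hu
  obtain ⟨e, -, he⟩ := hu
  exact ⟨e.2, congrArg Prod.snd he⟩

/-- Well defined because all out-neighbours of `u` have the same `φ`-image. -/
noncomputable def outImage (i : ℕ) (u : V (i + 1)) : V i :=
  G.φ i (G.surj (i + 1) u).2.choose

theorem outImage_eq {i : ℕ} {u w : V (i + 1)} (hw : (u, w) ∈ G.E (i + 1)) :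
    G.outImage i u = G.φ i w :=
  (G.cover i).2.2 u _ w (G.surj (i + 1) u).2.choose_spec hw

theorem compMap_eq_of_mem_limitSet {x : ∀ i, V i} (hx : x ∈ G.limitSet) {n m : ℕ}
    (h : n ≤ m) :
    compMap G.φ h (x m) = x n := by
  induction m, h using Nat.le_induction with
  | base => rw [compMap_refl]
  | succ m hm ih => rw [compMap_succ G.φ hm, ← hx m, ih]

theorem exists_mem_limitSet_apply_eq {m : ℕ} (u : V m) : ∃ x ∈ G.limitSet, x m = u := by
  -- lift `u` to every level `m + j`, then project the lift at level `m + i` down to level `i`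
  let z : ∀ j, V (m + j) := fun j => Nat.rec u (fun j zj => (G.φ_surjective (m + j) zj).choose) j
  have hz : ∀ j, G.φ (m + j) (z (j + 1)) = z j :=
    fun j => (G.φ_surjective (m + j) (z j)).choose_spec
  have hzu : ∀ j (h : m ≤ m + j), compMap G.φ h (z j) = u := by
    intro j
    induction j with
    | zero => exact fun h => compMap_refl G.φ h u
    | succ j ih => intro h; rw [compMap_succ G.φ (Nat.le_add_right m j), hz j, ih]
  refine ⟨fun i => compMap G.φ (Nat.le_add_left i m) (z i), fun i => ?_, hzu m _⟩
  dsimp only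
  rw [φ_compMap G.φ (Nat.le_add_left (i + 1) m) (by omega),
    compMap_succ G.φ (Nat.le_add_left i m), hz i]

section Limit

variable [∀ i, TopologicalSpace (V i)] [∀ i, DiscreteTopology (V i)]

theorem isClosed_limitSet : IsClosed G.limitSet := by
  rw [limitSet, Set.ofPred_forall]
  exact isClosed_iInter fun i => isClosed_eq (continuous_apply i)
    ((continuous_of_discreteTopology (f := G.φ i)).comp (continuous_apply (i + 1)))

instance [∀ i, Finite (V i)] : CompactSpace G.limitSet :=
  isCompact_iff_compactSpace.mp G.isClosed_limitSet.isCompact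

theorem isOpen_setOf_apply_eq (n : ℕ) (v : V n) :
    IsOpen {x : G.limitSet | (x : ∀ i, V i) n = v} :=
  (isOpen_discrete {v}).preimage ((continuous_apply n).comp continuous_subtype_val)

end Limit

def FollowsEdges (f : G.limitSet → G.limitSet) : Prop :=
  ∀ (x : G.limitSet) (i : ℕ), ((x : ∀ i, V i) i, (f x : ∀ i, V i) i) ∈ G.E i

namespace FollowsEdges

variable {G} {f : G.limitSet → G.limitSet}

theorem apply_eq_outImage (hf : G.FollowsEdges f) (x : G.limitSet) (i : ℕ) :
    (f x : ∀ i, V i) i = G.outImage i ((x : ∀ i, V i) (i + 1)) := by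
  rw [(f x).2 i, G.outImage_eq (hf x (i + 1))]

protected theorem continuous [∀ i, TopologicalSpace (V i)] [∀ i, DiscreteTopology (V i)]
    (hf : G.FollowsEdges f) : Continuous f := by
  refine continuous_induced_rng.mpr (continuous_pi fun i => ?_)
  convert (continuous_of_discreteTopology (f := G.outImage i)).comp
    ((continuous_apply (i + 1)).comp continuous_subtype_val) using 1
  exact funext (hf.apply_eq_outImage · i)

theorem iterate_apply_eq_compMap (hf : G.FollowsEdges f) (k : ℕ) {n j : ℕ} (hk : n + k ≤ j)
    (x : G.limitSet) (p : ℕ → V j) (hp : ∀ i < k, (p i, p (i + 1)) ∈ G.E j)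
    (hx : (x : ∀ i, V i) j = p 0) :
    (f^[k] x : ∀ i, V i) n = compMap G.φ (Nat.le_of_add_right_le hk) (p k) := by
  induction k generalizing j x p with
  | zero => rw [Function.iterate_zero_apply, ← hx, G.compMap_eq_of_mem_limitSet x.2]
  | succ k ih =>
    obtain ⟨j, rfl⟩ : ∃ j', j = j' + 1 := ⟨j - 1, by omega⟩
    have hfx : (f x : ∀ i, V i) j = G.φ j (p 1) := by
      rw [hf.apply_eq_outImage, hx, G.outImage_eq (hp 0 k.succ_pos)]
    rw [Function.iterate_succ_apply, ih (by omega) (f x) (fun i => G.φ j (p (i + 1)))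
      (fun i hi => (G.cover j).1 _ _ (hp (i + 1) (by omega))) hfx, ← compMap_succ]

end FollowsEdges

end GraphCovering

/-- Minimality criterion (necessity): if the inverse limit system is minimal,
then for every `n` there is `m > n` such that every circuit of `G m` projects
onto all vertices of `G n`. -/
theorem circuit_condition_of_limit_minimal {V : ℕ → Type*} [∀ i, Fintype (V i)]
    [∀ i, TopologicalSpace (V i)] [∀ i, DiscreteTopology (V i)]
    (G : GraphCovering V)
    (f : G.limitSet → G.limitSet)
    (hf : ∀ x y : G.limitSet, f x = y ↔
      ∀ i, ((x : ∀ i, V i) i, (y : ∀ i, V i) i) ∈ G.E i)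
    (hmin : ∀ x : G.limitSet, Dense (Set.range fun k : ℕ => f^[k] x)) :
    ∀ n : ℕ, ∃ m : ℕ, ∃ h : n < m,
      ∀ (l : ℕ) (c : ℕ → V m), IsCircuit (G.E m) l c →
        ∀ v : V n, ∃ i ≤ l, compMap G.φ h.le (c i) = v := by
  intro n
  have hedge : G.FollowsEdges f := fun x => (hf x (f x)).mp rfl
  have hvisit (v : V n) : ∀ᶠ N in atTop, ∀ x : G.limitSet,
      ∃ k ≤ N, f^[k] x ∈ {y : G.limitSet | (y : ∀ i, V i) n = v} := by
    obtain ⟨x₀, hx₀, hx₀v⟩ := G.exists_mem_limitSet_apply_eq v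
    refine eventually_forall_exists_iterate_mem hedge.continuous
      (G.isOpen_setOf_apply_eq n v) fun x => ?_
    obtain ⟨_, ⟨k, rfl⟩, hk⟩ :=
      (hmin x).exists_mem_open (G.isOpen_setOf_apply_eq n v) ⟨⟨x₀, hx₀⟩, hx₀v⟩
    exact ⟨k, hk⟩
  obtain ⟨N, hN⟩ := (eventually_all.mpr hvisit).exists
  refine ⟨n + N + 1, by omega, fun l c hc v => ?_⟩
  obtain ⟨x, hx, hx0⟩ := G.exists_mem_limitSet_apply_eq (c (0 % l))
  obtain ⟨k, hkN, hk⟩ := hN v ⟨x, hx⟩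
  refine ⟨k % l, (Nat.mod_lt k hc.1).le, ?_⟩
  rwa [← hedge.iterate_apply_eq_compMap k (by omega) ⟨x, hx⟩
    (fun i => c (i % l)) (fun i _ => hc.mem_mod i) hx0]
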